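/- Primal-dual optimality characterization for discrete EOT with strictly positive costs: (P_i) ∈ Γ^N_{a,b} and (λ,f,g) dual feasible are both optimal if and only if (1) f_k + g_l ≤ λ_i (C_i)_{kl} for all i,k,l; (2) ⟨P_i,C_i⟩ = ⟨P_j,C_j⟩ for all i,j; (3) for every i,k,l, if (P_i)_{kl} > 0 then f_k + g_l = λ_i (C_i)_{kl}. -/

import Mathlib

/-!
Weak duality: for `P ∈ Γ` and a feasible `(λ, f, g)`,
`⟨f, a⟩ + ⟨g, b⟩ = ∑ᵢ ⟨Pᵢ, f ⊕ g⟩ ≤ ∑ᵢ λᵢ ⟨Pᵢ, Cᵢ⟩ ≤ maxᵢ ⟨Pᵢ, Cᵢ⟩`, and the first inequality is an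
equality exactly under complementary slackness. An optimal `P` has equal costs: otherwise moving a
small fraction of every plan onto the cheapest agent lowers all the costs, because they are
nonnegative. Strong duality comes from separating the convex hull of the points
`(e_k, e_j, C_{ikj} e_i)`, i.e. the images of the transport plans of mass one, from the closed
convex set `{a} × {b} × (-∞, w]ᴺ` when `w` is below the optimal value; the normalized separating
functional is a dual solution of value above `w`.
-/

open Finset

/-- Frobenius inner product of two matrices. -/
def dot {n m : ℕ} (P C : Matrix (Fin n) (Fin m) ℝ) : ℝ := ∑ i, ∑ j, P i j * C i j

/-- `P` is a coupling of the probability vectors `a` and `b`. -/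
def IsCoupling {n m : ℕ} (a : Fin n → ℝ) (b : Fin m → ℝ)
    (P : Matrix (Fin n) (Fin m) ℝ) : Prop :=
  (∀ i j, 0 ≤ P i j) ∧ (∀ i, ∑ j, P i j = a i) ∧ (∀ j, ∑ i, P i j = b j)

/-- Discrete optimal transport value. -/
noncomputable def W {n m : ℕ} (a : Fin n → ℝ) (b : Fin m → ℝ)
    (C : Matrix (Fin n) (Fin m) ℝ) : ℝ :=
  sInf {t | ∃ P, IsCoupling a b P ∧ t = dot P C}

/-- The constraint set `Γ^N_{a,b}` of coupling decompositions. -/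
def Gamma (N : ℕ) {n m : ℕ} (a : Fin n → ℝ) (b : Fin m → ℝ) :
    Set (Fin N → Matrix (Fin n) (Fin m) ℝ) :=
  {P | (∀ k i j, 0 ≤ P k i j) ∧ (∀ i, ∑ k, ∑ j, P k i j = a i) ∧
       (∀ j, ∑ k, ∑ i, P k i j = b j)}

/-- Discrete equitable optimal transport value. -/
noncomputable def EOT {N n m : ℕ} (a : Fin n → ℝ) (b : Fin m → ℝ)
    (C : Fin N → Matrix (Fin n) (Fin m) ℝ) : ℝ :=
  sInf {t | ∃ P ∈ Gamma N a b, t = ⨆ i, dot (P i) (C i)}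

section Basic

variable {N n m : ℕ}

lemma dot_add_left (P Q C : Matrix (Fin n) (Fin m) ℝ) : dot (P + Q) C = dot P C + dot Q C := by
  simp only [dot, Matrix.add_apply, add_mul, sum_add_distrib]

lemma dot_smul_left (r : ℝ) (P C : Matrix (Fin n) (Fin m) ℝ) : dot (r • P) C = r * dot P C := by
  simp only [dot, Matrix.smul_apply, smul_eq_mul, mul_sum, mul_assoc]

lemma dot_nonneg {P C : Matrix (Fin n) (Fin m) ℝ} (hP : ∀ k j, 0 ≤ P k j) (hC : ∀ k j, 0 ≤ C k j) :
    0 ≤ dot P C :=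
  sum_nonneg fun k _ => sum_nonneg fun j _ => mul_nonneg (hP k j) (hC k j)

lemma convex_Gamma (a : Fin n → ℝ) (b : Fin m → ℝ) : Convex ℝ (Gamma N a b) := by
  rintro P ⟨hP0, hPa, hPb⟩ Q ⟨hQ0, hQa, hQb⟩ s t hs ht hst
  refine ⟨fun i k j => ?_, fun k => ?_, fun j => ?_⟩
  · simp only [Pi.add_apply, Pi.smul_apply, Matrix.add_apply, Matrix.smul_apply, smul_eq_mul]
    exact add_nonneg (mul_nonneg hs (hP0 i k j)) (mul_nonneg ht (hQ0 i k j))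
  · simp only [Pi.add_apply, Pi.smul_apply, Matrix.add_apply, Matrix.smul_apply, smul_eq_mul,
      sum_add_distrib, ← mul_sum, hPa, hQa, ← add_mul, hst, one_mul]
  · simp only [Pi.add_apply, Pi.smul_apply, Matrix.add_apply, Matrix.smul_apply, smul_eq_mul,
      sum_add_distrib, ← mul_sum, hPb, hQb, ← add_mul, hst, one_mul]

lemma single_sum_mem_Gamma {a : Fin n → ℝ} {b : Fin m → ℝ} {P : Fin N → Matrix (Fin n) (Fin m) ℝ}
    (hP : P ∈ Gamma N a b) (j : Fin N) : Pi.single j (∑ i, P i) ∈ Gamma N a b := by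
  obtain ⟨hP0, hPa, hPb⟩ := hP
  have hR : ∀ i k l, (Pi.single j (∑ i, P i) : Fin N → Matrix (Fin n) (Fin m) ℝ) i k l =
      if i = j then ∑ i, P i k l else 0 := by
    intro i k l
    rcases eq_or_ne i j with rfl | hij <;> simp [Matrix.sum_apply, *]
  refine ⟨fun i k l => ?_, fun k => ?_, fun l => ?_⟩
  · rw [hR]
    split_ifs
    exacts [sum_nonneg fun i _ => hP0 i k l, le_rfl]
  · simpa [hR, sum_comm (γ := Fin N)] using hPa k
  · simpa [hR, sum_comm (γ := Fin N)] using hPb l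

end Basic

section WeakDuality

variable {N n m : ℕ} {a : Fin n → ℝ} {b : Fin m → ℝ} {C P : Fin N → Matrix (Fin n) (Fin m) ℝ}
  {l : Fin N → ℝ} {f : Fin n → ℝ} {g : Fin m → ℝ}

lemma dual_objective_eq_sum (hP : P ∈ Gamma N a b) (f : Fin n → ℝ) (g : Fin m → ℝ) :
    ∑ k, f k * a k + ∑ j, g j * b j = ∑ i, ∑ k, ∑ j, P i k j * (f k + g j) := by
  obtain ⟨-, hPa, hPb⟩ := hP
  simp only [← hPa, ← hPb, mul_sum, mul_add, sum_add_distrib]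
  congr 1
  · rw [sum_comm]
    simp only [mul_comm]
  · rw [sum_comm]
    refine sum_congr rfl fun i _ => ?_
    rw [sum_comm]
    simp only [mul_comm]

lemma sum_mul_dot_eq (P C : Fin N → Matrix (Fin n) (Fin m) ℝ) (l : Fin N → ℝ) :
    ∑ i, l i * dot (P i) (C i) = ∑ i, ∑ k, ∑ j, P i k j * (l i * C i k j) := by
  simp only [dot, mul_sum]
  exact sum_congr rfl fun i _ => sum_congr rfl fun k _ => sum_congr rfl fun j _ => by ring

lemma dual_objective_le (hP : P ∈ Gamma N a b) (hfeas : ∀ i k j, f k + g j ≤ l i * C i k j) :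
    ∑ k, f k * a k + ∑ j, g j * b j ≤ ∑ i, l i * dot (P i) (C i) := by
  rw [dual_objective_eq_sum hP, sum_mul_dot_eq]
  gcongr with i _ k _ j _
  exacts [hP.1 i k j, hfeas i k j]

lemma dual_objective_eq_iff (hP : P ∈ Gamma N a b) (hfeas : ∀ i k j, f k + g j ≤ l i * C i k j) :
    ∑ k, f k * a k + ∑ j, g j * b j = ∑ i, l i * dot (P i) (C i) ↔
      ∀ i k j, 0 < P i k j → f k + g j = l i * C i k j := by
  have hle : ∀ i k j, P i k j * (f k + g j) ≤ P i k j * (l i * C i k j) := fun i k j =>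
    mul_le_mul_of_nonneg_left (hfeas i k j) (hP.1 i k j)
  rw [dual_objective_eq_sum hP, sum_mul_dot_eq,
    sum_eq_sum_iff_of_le fun i _ => sum_le_sum fun k _ => sum_le_sum fun j _ => hle i k j]
  simp only [mem_univ, forall_const]
  refine forall_congr' fun i => ?_
  rw [sum_eq_sum_iff_of_le fun k _ => sum_le_sum fun j _ => hle i k j]
  simp only [mem_univ, forall_const]
  refine forall_congr' fun k => ?_
  rw [sum_eq_sum_iff_of_le fun j _ => hle i k j]
  simp only [mem_univ, forall_const]
  refine forall_congr' fun j => ?_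
  rw [mul_eq_mul_left_iff, (hP.1 i k j).lt_iff_ne', or_iff_not_imp_right]

end WeakDuality

section Simplex

variable {ι : Type*} [Fintype ι] {l : ι → ℝ}

lemma sum_mul_le_ciSup_of_mem_stdSimplex (hl : l ∈ stdSimplex ℝ ι) (x : ι → ℝ) :
    ∑ i, l i * x i ≤ ⨆ i, x i :=
  calc ∑ i, l i * x i ≤ ∑ i, l i * ⨆ i, x i := sum_le_sum fun i _ =>
        mul_le_mul_of_nonneg_left (le_ciSup (Finite.bddAbove_range x) i) (hl.1 i)
    _ = ⨆ i, x i := by rw [← sum_mul, hl.2, one_mul]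

lemma sum_mul_eq_of_mem_stdSimplex (hl : l ∈ stdSimplex ℝ ι) {x : ι → ℝ} {v : ℝ}
    (hx : ∀ i, x i = v) : ∑ i, l i * x i = v := by
  simp only [hx, ← sum_mul, hl.2, one_mul]

end Simplex

lemma dot_eq_iSup_of_optimal {N n m : ℕ} {a : Fin n → ℝ} {b : Fin m → ℝ}
    {C P : Fin N → Matrix (Fin n) (Fin m) ℝ} (hC : ∀ i k l, 0 ≤ C i k l) (hP : P ∈ Gamma N a b)
    (hopt : ∀ Q ∈ Gamma N a b, (⨆ i, dot (P i) (C i)) ≤ ⨆ i, dot (Q i) (C i)) (j : Fin N) :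
    dot (P j) (C j) = ⨆ i, dot (P i) (C i) := by
  set v := ⨆ i, dot (P i) (C i)
  have hDv : ∀ i, dot (P i) (C i) ≤ v := le_ciSup (Finite.bddAbove_range _)
  have hD0 : ∀ i, 0 ≤ dot (P i) (C i) := fun i => dot_nonneg (hP.1 i) (hC i)
  refine le_antisymm (hDv j) (not_lt.1 fun hj => ?_)
  have hv : 0 < v := (hD0 j).trans_lt hj
  set K := dot (∑ i, P i) (C j)
  have hK : 0 ≤ K := dot_nonneg
    (fun k l => by simpa [Matrix.sum_apply] using sum_nonneg fun i _ => hP.1 i k l) (hC j)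
  -- small enough that the new cost `(1 - ε) * dot (P j) (C j) + ε * K` of agent `j` stays below `v`
  set ε := (v - dot (P j) (C j)) / (v + K)
  have hε0 : 0 < ε := div_pos (by linarith) (by linarith)
  have hε1 : ε ≤ 1 := (div_le_one (by linarith)).2 (by linarith [hD0 j])
  set Q : Fin N → Matrix (Fin n) (Fin m) ℝ :=
    (1 - ε) • P + ε • Pi.single (M := fun _ => Matrix (Fin n) (Fin m) ℝ) j (∑ i, P i)
  have hQ : Q ∈ Gamma N a b :=
    convex_Gamma a b hP (single_sum_mem_Gamma hP j) (by linarith) hε0.le (by ring)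
  have hQv : ∀ i, dot (Q i) (C i) < v := by
    intro i
    simp only [Q, Pi.add_apply, Pi.smul_apply, dot_add_left, dot_smul_left]
    rcases eq_or_ne i j with rfl | hij
    · rw [Pi.single_eq_same]
      have : ε * (K - dot (P i) (C i)) < v - dot (P i) (C i) := by
        rw [div_mul_eq_mul_div, div_lt_iff₀ (by linarith)]
        nlinarith [mul_pos (sub_pos.2 hj) (add_pos_of_pos_of_nonneg hv (hD0 i))]
      linarith
    · rw [Pi.single_eq_of_ne hij, show dot 0 (C i) = 0 from by simp [dot]]
      nlinarith [hDv i]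
  have : Nonempty (Fin N) := ⟨j⟩
  obtain ⟨i, hi⟩ := exists_eq_ciSup_of_finite (f := fun i => dot (Q i) (C i))
  exact (hopt Q hQ).not_gt (hi ▸ hQv i)

section StrongDuality

variable {N n m : ℕ} {a : Fin n → ℝ} {b : Fin m → ℝ} {C : Fin N → Matrix (Fin n) (Fin m) ℝ}

lemma nonneg_of_forall_sub_mul_lt {c z u : ℝ} (h : ∀ t, 0 ≤ t → c - t * z < u) : 0 ≤ z := by
  by_contra! hz
  have := h (|u - c| / -z) (div_nonneg (abs_nonneg _) (neg_nonneg.2 hz.le))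
  rw [div_mul_eq_mul_div, div_neg, mul_div_cancel_right₀ _ hz.ne] at this
  linarith [le_abs_self (u - c)]

/-- The row marginal, column marginal and agent costs of the unit plan at `x`. -/
def planPoint (C : Fin N → Matrix (Fin n) (Fin m) ℝ) (x : Fin N × Fin n × Fin m) :
    Fin n ⊕ Fin m ⊕ Fin N → ℝ :=
  Sum.elim (Pi.single x.2.1 1) (Sum.elim (Pi.single x.2.2 1) (Pi.single x.1 (C x.1 x.2.1 x.2.2)))

lemma disjoint_image_stdSimplex_of_forall_exists_lt {w : ℝ}
    (hw : ∀ Q ∈ Gamma N a b, ∃ i, w < dot (Q i) (C i)) :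
    Disjoint
      (Set.univ.pi (Sum.elim (fun k => {a k}) (Sum.elim (fun j => {b j}) fun _ => Set.Iic w)))
      (Fintype.linearCombination ℝ (planPoint C) '' stdSimplex ℝ _) := by
  rw [Set.disjoint_right]
  rintro _ ⟨q, hq, rfl⟩ hT
  simp only [Set.mem_univ_pi, Sum.forall, Sum.elim_inl, Fintype.linearCombination_apply,
    Finset.sum_apply, Pi.smul_apply,
    Pi.single_apply, smul_eq_mul, mul_ite, mul_one, mul_zero, Fintype.sum_prod_type,
    Set.mem_singleton_iff, Sum.elim_inr, sum_ite_eq, mem_univ, ↓reduceIte, sum_ite_irrel,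
    sum_const_zero, Set.mem_Iic, planPoint] at hT
  obtain ⟨i, hi⟩ := hw (fun i k j => q (i, k, j)) ⟨fun i k j => hq.1 _, hT.1, hT.2.1⟩
  exact hi.not_ge (hT.2.2 i)

theorem exists_separating_of_forall_exists_lt (w : ℝ)
    (hw : ∀ Q ∈ Gamma N a b, ∃ i, w < dot (Q i) (C i)) :
    ∃ (F : Fin n → ℝ) (G : Fin m → ℝ) (Λ : Fin N → ℝ) (c : ℝ), (∀ i, 0 ≤ Λ i) ∧
      (∀ i k j, c < F k + G j + C i k j * Λ i) ∧
      ∑ k, F k * a k + ∑ j, G j * b j + w * ∑ i, Λ i < c := by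
  set L := Fintype.linearCombination ℝ (planPoint C)
  set T : Set (Fin n ⊕ Fin m ⊕ Fin N → ℝ) :=
    Set.univ.pi (Sum.elim (fun k => {a k}) (Sum.elim (fun j => {b j}) fun _ => Set.Iic w))
  obtain ⟨φ, u, u', hφT, huu', hφH⟩ := geometric_hahn_banach_closed_compact
    (convex_pi fun σ _ => by rcases σ with k | j | i <;> simp [convex_singleton, convex_Iic])
    (isClosed_set_pi fun σ _ => by rcases σ with k | j | i <;> simp [isClosed_Iic])
    ((convex_stdSimplex ℝ _).linear_image L)
    ((isCompact_stdSimplex _ _).image L.continuous_of_finiteDimensional)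
    (disjoint_image_stdSimplex_of_forall_exists_lt hw)
  set Φ := fun σ => φ (Pi.single σ 1)
  have hφ : ∀ y, φ y = ∑ k, y (.inl k) * Φ (.inl k) + ∑ j, y (.inr (.inl j)) * Φ (.inr (.inl j))
      + ∑ i, y (.inr (.inr i)) * Φ (.inr (.inr i)) := by
    intro y
    conv_lhs => rw [pi_eq_sum_univ' y]
    simp only [Fintype.sum_sum_type, map_add, map_sum, map_smul, smul_eq_mul, Φ, add_assoc]
  set x₀ : Fin n ⊕ Fin m ⊕ Fin N → ℝ := Sum.elim a (Sum.elim b fun _ => w)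
  have hx₀ : x₀ ∈ T := by rintro (k | j | i) - <;> simp [x₀]
  refine ⟨fun k => Φ (.inl k), fun j => Φ (.inr (.inl j)), fun i => Φ (.inr (.inr i)), u',
    fun i => nonneg_of_forall_sub_mul_lt (c := φ x₀) (u := u) fun t ht => ?_, fun i k j => ?_, ?_⟩
  -- `T` is unbounded below in the cost coordinates, which forces `Λ ≥ 0`
  · have hmem : x₀ - t • Pi.single (.inr (.inr i)) 1 ∈ T := by
      rintro (k | j | i') - <;> simp [x₀, Pi.single_apply, ite_nonneg, ht]
    simpa [Φ] using hφT _ hmem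
  · have hplan : planPoint C (i, k, j) ∈ L '' stdSimplex ℝ _ :=
      ⟨Pi.single (i, k, j) 1, single_mem_stdSimplex _ _,
        by simp [L, Fintype.linearCombination_apply_single]⟩
    have := hφH _ hplan
    rw [hφ] at this
    simpa [planPoint, Pi.single_apply] using this
  · have := hφT _ hx₀
    rw [hφ] at this
    simp only [x₀, Sum.elim_inl, Sum.elim_inr, ← mul_sum, mul_comm (a _), mul_comm (b _)] at this
    linarith

theorem exists_dual_of_separating (ha : ∑ k, a k = 1) {P : Fin N → Matrix (Fin n) (Fin m) ℝ}
    (hP : P ∈ Gamma N a b) {F : Fin n → ℝ} {G : Fin m → ℝ} {Λ : Fin N → ℝ} {c w : ℝ}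
    (hΛ : ∀ i, 0 ≤ Λ i) (hvert : ∀ i k j, c < F k + G j + C i k j * Λ i)
    (hpt : ∑ k, F k * a k + ∑ j, G j * b j + w * ∑ i, Λ i < c) :
    ∃ l ∈ stdSimplex ℝ (Fin N), ∃ (f : Fin n → ℝ) (g : Fin m → ℝ),
      (∀ i k j, f k + g j ≤ l i * C i k j) ∧ w < ∑ k, f k * a k + ∑ j, g j * b j := by
  set s := ∑ i, Λ i
  -- if `Λ = 0`, averaging `hvert` over the plan `P` of mass one contradicts `hpt`
  have hs : 0 < s := by
    refine (sum_nonneg fun i _ => hΛ i).lt_of_ne fun hs => ?_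
    have hΛ0 : ∀ i, Λ i = 0 := fun i => (sum_eq_zero_iff_of_nonneg fun i _ => hΛ i).1 hs.symm i
      (mem_univ i)
    have hc : ∑ k, c * a k + ∑ j, 0 * b j ≤ ∑ k, F k * a k + ∑ j, G j * b j := by
      rw [dual_objective_eq_sum hP, dual_objective_eq_sum hP]
      refine sum_le_sum fun i _ => sum_le_sum fun k _ => sum_le_sum fun j _ =>
        mul_le_mul_of_nonneg_left ?_ (hP.1 i k j)
      simpa [hΛ0] using (hvert i k j).le
    rw [show s = 0 from hs.symm, mul_zero] at hpt
    simp only [← mul_sum, ha, zero_mul, sum_const_zero] at hc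
    linarith
  refine ⟨fun i => Λ i / s, ⟨fun i => div_nonneg (hΛ i) hs.le, by rw [← sum_div, div_self hs.ne']⟩,
    fun k => (c - F k) / s, fun j => -G j / s, fun i k j => ?_, ?_⟩
  · rw [div_mul_eq_mul_div, ← add_div, div_le_div_iff_of_pos_right hs]
    linarith [hvert i k j]
  · have : ∑ k, (c - F k) / s * a k + ∑ j, -G j / s * b j =
        (c - (∑ k, F k * a k + ∑ j, G j * b j)) / s := by
      simp only [div_mul_eq_mul_div, ← sum_div, ← add_div, sub_mul, neg_mul, sum_sub_distrib,
        sum_neg_distrib, ← mul_sum, ha]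
      ring
    rw [this, lt_div_iff₀ hs]
    linarith

theorem exists_dual_gt_of_forall_exists_lt (ha : ∑ k, a k = 1)
    {P : Fin N → Matrix (Fin n) (Fin m) ℝ} (hP : P ∈ Gamma N a b) {w : ℝ}
    (hw : ∀ Q ∈ Gamma N a b, ∃ i, w < dot (Q i) (C i)) :
    ∃ l ∈ stdSimplex ℝ (Fin N), ∃ (f : Fin n → ℝ) (g : Fin m → ℝ),
      (∀ i k j, f k + g j ≤ l i * C i k j) ∧ w < ∑ k, f k * a k + ∑ j, g j * b j :=
  let ⟨_, _, _, _, hΛ, hvert, hpt⟩ := exists_separating_of_forall_exists_lt w hw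
  exists_dual_of_separating ha hP hΛ hvert hpt

end StrongDuality

theorem stmt_12_general (N n m : ℕ) (hN : 0 < N) (a : Fin n → ℝ) (b : Fin m → ℝ)
    (ha : a ∈ stdSimplex ℝ (Fin n))
    (C : Fin N → Matrix (Fin n) (Fin m) ℝ) (hC : ∀ i k l, 0 < C i k l)
    (P : Fin N → Matrix (Fin n) (Fin m) ℝ) (hP : P ∈ Gamma N a b)
    (l : Fin N → ℝ) (hl : l ∈ stdSimplex ℝ (Fin N))
    (f : Fin n → ℝ) (g : Fin m → ℝ) :
    ((∀ Q ∈ Gamma N a b, (⨆ i, dot (P i) (C i)) ≤ ⨆ i, dot (Q i) (C i)) ∧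
     (∀ i k j, f k + g j ≤ l i * C i k j) ∧
     (∀ l' ∈ stdSimplex ℝ (Fin N), ∀ f' : Fin n → ℝ, ∀ g' : Fin m → ℝ,
        (∀ i k j, f' k + g' j ≤ l' i * C i k j) →
        ∑ k, f' k * a k + ∑ j, g' j * b j ≤ ∑ k, f k * a k + ∑ j, g j * b j)) ↔
    ((∀ i k j, f k + g j ≤ l i * C i k j) ∧
     (∀ i j, dot (P i) (C i) = dot (P j) (C j)) ∧
     (∀ i k j, 0 < P i k j → f k + g j = l i * C i k j)) := by
  have : Nonempty (Fin N) := ⟨⟨0, hN⟩⟩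
  constructor
  · rintro ⟨hopt, hfeas, hdopt⟩
    have hcost := dot_eq_iSup_of_optimal (fun i k j => (hC i k j).le) hP hopt
    have hge : ⨆ i, dot (P i) (C i) ≤ ∑ k, f k * a k + ∑ j, g j * b j := by
      by_contra! hlt
      obtain ⟨l', hl', f', g', hfeas', hgt⟩ := exists_dual_gt_of_forall_exists_lt ha.2 hP
        fun Q hQ => exists_lt_of_lt_ciSup (hlt.trans_le (hopt Q hQ))
      exact (hdopt l' hl' f' g' hfeas').not_gt hgt
    refine ⟨hfeas, fun i j => (hcost i).trans (hcost j).symm,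
      (dual_objective_eq_iff hP hfeas).1 (le_antisymm (dual_objective_le hP hfeas) ?_)⟩
    rwa [sum_mul_eq_of_mem_stdSimplex hl hcost]
  · rintro ⟨hfeas, heq, hslack⟩
    set v := dot (P ⟨0, hN⟩) (C ⟨0, hN⟩)
    have hcost : ∀ i, dot (P i) (C i) = v := fun i => heq i _
    have hdual : ∑ k, f k * a k + ∑ j, g j * b j = v :=
      ((dual_objective_eq_iff hP hfeas).2 hslack).trans (sum_mul_eq_of_mem_stdSimplex hl hcost)
    refine ⟨fun Q hQ => ?_, hfeas, fun l' hl' f' g' hfeas' => ?_⟩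
    · calc ⨆ i, dot (P i) (C i) = v := by simp only [hcost, ciSup_const]
        _ ≤ ∑ i, l i * dot (Q i) (C i) := hdual ▸ dual_objective_le hQ hfeas
        _ ≤ ⨆ i, dot (Q i) (C i) := sum_mul_le_ciSup_of_mem_stdSimplex hl _
    · calc ∑ k, f' k * a k + ∑ j, g' j * b j ≤ ∑ i, l' i * dot (P i) (C i) :=
            dual_objective_le hP hfeas'
        _ = v := sum_mul_eq_of_mem_stdSimplex hl' hcost
        _ = ∑ k, f k * a k + ∑ j, g j * b j := hdual.symm

/-- Primal-dual optimality characterization for discrete EOT with strictly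
positive costs: `P` primal optimal and `(λ,f,g)` dual optimal iff
(1) dual feasibility, (2) equal costs, (3) complementary slackness. -/
theorem stmt_12 (N n m : ℕ) (hN : 0 < N) (a : Fin n → ℝ) (b : Fin m → ℝ)
    (ha : a ∈ stdSimplex ℝ (Fin n)) (hb : b ∈ stdSimplex ℝ (Fin m))
    (C : Fin N → Matrix (Fin n) (Fin m) ℝ) (hC : ∀ i k l, 0 < C i k l)
    (P : Fin N → Matrix (Fin n) (Fin m) ℝ) (hP : P ∈ Gamma N a b)
    (l : Fin N → ℝ) (hl : l ∈ stdSimplex ℝ (Fin N))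
    (f : Fin n → ℝ) (g : Fin m → ℝ) :
    ((∀ Q ∈ Gamma N a b, (⨆ i, dot (P i) (C i)) ≤ ⨆ i, dot (Q i) (C i)) ∧
     (∀ i k j, f k + g j ≤ l i * C i k j) ∧
     (∀ l' ∈ stdSimplex ℝ (Fin N), ∀ f' : Fin n → ℝ, ∀ g' : Fin m → ℝ,
        (∀ i k j, f' k + g' j ≤ l' i * C i k j) →
        ∑ k, f' k * a k + ∑ j, g' j * b j ≤ ∑ k, f k * a k + ∑ j, g j * b j)) ↔
    ((∀ i k j, f k + g j ≤ l i * C i k j) ∧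
     (∀ i j, dot (P i) (C i) = dot (P j) (C j)) ∧
     (∀ i k j, 0 < P i k j → f k + g j = l i * C i k j)) :=
  stmt_12_general N n m hN a b ha C hC P hP l hl f g
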